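/- Let 1 ≤ k ≤ n−1, let ψ : {1,…,n} → ℂ and let P be the homogeneous operator of degree k associated to ψ. Suppose P is a Rota–Baxter operator of weight 0, i.e. P(x)·P(y) = P(x·P(y) + P(x)·y) for all x, y ∈ A. Then ψ(i) = 0 for all n−k+1 ≤ i ≤ n, and ψ(i)·ψ(j) = (ψ(i) + ψ(j))·ψ(i+j+k) for all i, j ≥ 1 with 2 ≤ i + j ≤ n − 2k. -/
import Mathlib


open Finset

/-- Coordinate space of the `n`-dimensional complex null-filiform associative algebra,
with respect to the basis `e_1, …, e_n` (coordinate `m : Fin n` corresponds to `e_{m+1}`). -/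
abbrev NF (n : ℕ) : Type := Fin n → ℂ

/-- Multiplication of the null-filiform algebra: `e_i · e_j = e_{i+j}` if `i + j ≤ n`
and `e_i · e_j = 0` if `i + j > n`, extended bilinearly. -/
noncomputable def nfMul {n : ℕ} (x y : NF n) : NF n :=
  fun m => ∑ i : Fin n, ∑ j : Fin n,
    if (i : ℕ) + (j : ℕ) + 1 = (m : ℕ) then x i * y j else 0

/-- The basis element `e_k`, for `1 ≤ k ≤ n` (it is `0` if `k = 0` or `k > n`). -/
noncomputable def nfE (n k : ℕ) : NF n := fun m => if (m : ℕ) + 1 = k then 1 else 0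

/-- The `k`-th power (for `k ≥ 1`) of an element of the null-filiform algebra. -/
noncomputable def nfPow {n : ℕ} (x : NF n) : ℕ → NF n
  | 0 => 0
  | 1 => x
  | k + 2 => nfMul (nfPow x (k + 1)) x

lemma nfMul_smul_left {n : ℕ} (c : ℂ) (x y : NF n) :
    nfMul (c • x) y = c • nfMul x y := by
  funext m
  simp [nfMul, Finset.mul_sum, mul_ite, mul_assoc]

lemma nfMul_smul_right {n : ℕ} (c : ℂ) (x y : NF n) :
    nfMul x (c • y) = c • nfMul x y := by
  funext m
  simp [nfMul, Finset.mul_sum, mul_ite, mul_left_comm]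

lemma nfE_eq_zero {n c : ℕ} (h : n < c) : nfE n c = 0 := by
  funext m
  have := m.isLt
  simp only [nfE, Pi.zero_apply, ite_eq_right_iff]
  omega

lemma nfMul_nfE {n a b : ℕ} (ha1 : 1 ≤ a) (ha2 : a ≤ n) (hb1 : 1 ≤ b) (hb2 : b ≤ n) :
    nfMul (nfE n a) (nfE n b) = nfE n (a + b) := by
  funext m
  simp only [nfMul, nfE]
  rw [Finset.sum_eq_single (⟨a - 1, by omega⟩ : Fin n)]
  · rw [Finset.sum_eq_single (⟨b - 1, by omega⟩ : Fin n)]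
    · have h1 : (a - 1 : ℕ) + 1 = a := by omega
      have h2 : (b - 1 : ℕ) + 1 = b := by omega
      have h3 : ((a - 1 : ℕ) + (b - 1) + 1 = (m : ℕ)) ↔ ((m : ℕ) + 1 = a + b) := by omega
      simp [h1, h2, h3]
    · intro j _ hj
      have : ¬ ((j : ℕ) + 1 = b) := by simp [Fin.ext_iff] at hj; omega
      simp [this]
    · intro h; exact absurd (Finset.mem_univ _) h
  · intro i _ hi
    apply Finset.sum_eq_zero
    intro j _
    have : ¬ ((i : ℕ) + 1 = a) := by simp [Fin.ext_iff] at hi; omega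
    simp [this]
  · intro h; exact absurd (Finset.mem_univ _) h


/-- A homogeneous Rota–Baxter operator of weight `0` and degree `k ≥ 1` satisfies
`ψ(i) = 0` for `n−k+1 ≤ i ≤ n`, and
`ψ(i)ψ(j) = (ψ(i)+ψ(j))ψ(i+j+k)` for `2 ≤ i+j ≤ n−2k`. -/
theorem rota_baxter_weight0_degreek (n k : ℕ) (hk1 : 1 ≤ k) (hk2 : k ≤ n - 1)
    (ψ : ℕ → ℂ) (P : NF n →ₗ[ℂ] NF n)
    (hP : ∀ i, 1 ≤ i → i ≤ n →
      P (nfE n i) = ψ i • nfE n (if i + k ≤ n then i + k else i + k - n))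
    (hRB : ∀ x y : NF n,
      nfMul (P x) (P y) = P (nfMul x (P y) + nfMul (P x) y)) :
    (∀ i, n - k + 1 ≤ i → i ≤ n → ψ i = 0) ∧
    (∀ i j, 1 ≤ i → 1 ≤ j → i + j ≤ n - 2 * k →
      ψ i * ψ j = (ψ i + ψ j) * ψ (i + j + k)) := by
  have hn2 : 2 ≤ n := by omega
  constructor
  · intro i hi1 hi2
    have h := hRB (nfE n i) (nfE n (n - k))
    rw [hP i (by omega) hi2, hP (n - k) (by omega) (by omega),
      if_neg (show ¬ (i + k ≤ n) by omega), if_pos (show n - k + k ≤ n by omega),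
      show n - k + k = n by omega] at h
    simp only [nfMul_smul_left, nfMul_smul_right] at h
    rw [nfMul_nfE (show 1 ≤ i + k - n by omega) (show i + k - n ≤ n by omega)
        (show 1 ≤ n by omega) (le_refl n),
      nfMul_nfE (show 1 ≤ i by omega) hi2 (show 1 ≤ n by omega) (le_refl n),
      nfMul_nfE (show 1 ≤ i + k - n by omega) (show i + k - n ≤ n by omega)
        (show 1 ≤ n - k by omega) (show n - k ≤ n by omega),
      nfE_eq_zero (show n < i + k - n + n by omega),
      nfE_eq_zero (show n < i + n by omega),
      show i + k - n + (n - k) = i by omega] at h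
    simp only [smul_zero, zero_add] at h
    rw [map_smul, hP i (by omega) hi2, if_neg (show ¬ (i + k ≤ n) by omega)] at h
    have h2 := congrFun h.symm ⟨i + k - n - 1, by omega⟩
    simp only [Pi.smul_apply, smul_eq_mul, nfE, Pi.zero_apply] at h2
    rw [if_pos (show i + k - n - 1 + 1 = i + k - n by omega)] at h2
    exact mul_self_eq_zero.mp (by linear_combination h2)
  · intro i j hi hj hij
    have hn : 2 * k + (i + j) ≤ n := by omega
    have h := hRB (nfE n i) (nfE n j)
    rw [hP i hi (by omega), hP j hj (by omega),
      if_pos (show i + k ≤ n by omega), if_pos (show j + k ≤ n by omega)] at h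
    simp only [nfMul_smul_left, nfMul_smul_right] at h
    rw [nfMul_nfE (show 1 ≤ i + k by omega) (show i + k ≤ n by omega)
        (show 1 ≤ j + k by omega) (show j + k ≤ n by omega),
      nfMul_nfE hi (by omega) (show 1 ≤ j + k by omega) (show j + k ≤ n by omega),
      nfMul_nfE (show 1 ≤ i + k by omega) (show i + k ≤ n by omega) hj (by omega),
      show i + (j + k) = i + j + k by omega,
      show i + k + j = i + j + k by omega] at h
    rw [map_add, map_smul, map_smul, hP (i + j + k) (by omega) (by omega),
      if_pos (show i + j + k + k ≤ n by omega),
      show i + k + (j + k) = i + j + k + k by omega] at h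
    have h2 := congrFun h ⟨i + j + k + k - 1, by omega⟩
    simp only [Pi.add_apply, Pi.smul_apply, smul_eq_mul, nfE] at h2
    rw [if_pos (show i + j + k + k - 1 + 1 = i + j + k + k by omega)] at h2
    linear_combination h2
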